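/- Abstract Green's formula: with H, A_min, A'_min, A_γ as in the dual-pair setup with 0 ∈ ρ(A_γ), write u = u_γ + u_ζ (projection along D(A_γ) ∔ Z with Z = ker A_max) and v = v_{γ'} + v_{ζ'} (projection along D(A_γ*) ∔ Z' with Z' = ker A'_max). Then for all u ∈ D(A_max) and v ∈ D(A'_max): (A_max u, v) − (u, A'_max v) = ((A_max u)_{Z'}, v_{ζ'}) − (u_ζ, (A'_max v)_Z), where (·)_{Z'} and (·)_Z denote orthogonal projections of H onto Z' and Z respectively. -/
import Mathlib


open scoped InnerProductSpace

variable {H : Type*} [NormedAddCommGroup H] [InnerProductSpace ℂ H] [CompleteSpace H]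

/-- The kernel of a partially defined linear operator, as a submodule of `H`. -/
def kerSub (f : H →ₗ.[ℂ] H) : Submodule ℂ H where
  carrier := {x | (x, (0 : H)) ∈ f.graph}
  add_mem' := by
    intro a b ha hb
    have := f.graph.add_mem ha hb
    simpa using this
  zero_mem' := f.graph.zero_mem
  smul_mem' := by
    intro c a ha
    have := f.graph.smul_mem c ha
    simpa using this

/-- `p` is the orthogonal projection of `x` onto the subspace `K`. -/
def IsOrthProjOn (K : Submodule ℂ H) (x p : H) : Prop :=
  p ∈ K ∧ ∀ w ∈ K, ⟪x - p, w⟫_ℂ = 0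

/-- `B` is an everywhere defined bounded inverse of the (in general unbounded, partially
defined) operator `A`; i.e. `0` belongs to the resolvent set of `A`. -/
def IsBoundedInverse (A : H →ₗ.[ℂ] H) (B : H →L[ℂ] H) : Prop :=
  (∀ x y : H, (x, y) ∈ A.graph → B y = x) ∧ ∀ f : H, (B f, f) ∈ A.graph

/-- `B` is the everywhere defined bounded resolvent `(A - λ)⁻¹` of `A` at `λ`;
i.e. `λ` belongs to the resolvent set of `A`. -/
def IsResolventAt (A : H →ₗ.[ℂ] H) (lam : ℂ) (B : H →L[ℂ] H) : Prop :=
  (∀ x y : H, (x, y) ∈ A.graph → B (y - lam • x) = x) ∧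
    ∀ f : H, (B f, f + lam • B f) ∈ A.graph

/-- Abstract Green's formula.  With `A_max = (A'_min)*`,
`A'_max = (A_min)*`, reference operator `A_γ` (inverse `B`) and its adjoint `A_γ*`
(inverse `B'`), write `u_γ = A_γ⁻¹ A_max u`, `u_ζ = u - u_γ` and
`v_{γ'} = (A_γ*)⁻¹ A'_max v`, `v_{ζ'} = v - v_{γ'}`.  Then for all `u ∈ D(A_max)`,
`v ∈ D(A'_max)`:
`(A_max u, v) − (u, A'_max v) = ((A_max u)_{Z'}, v_{ζ'}) − (u_ζ, (A'_max v)_Z)`,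
where `(·)_{Z'}`, `(·)_Z` are the orthogonal projections onto `Z' = ker A'_max` and
`Z = ker A_max`. -/
theorem stmt3 (Amin A'min Aγ : H →ₗ.[ℂ] H)
    (hAminDense : Dense (Amin.domain : Set H)) (hA'minDense : Dense (A'min.domain : Set H))
    (hAminClosed : Amin.IsClosed) (hA'minClosed : A'min.IsClosed)
    (hdual : Amin ≤ A'min.adjoint) (hdual' : A'min ≤ Amin.adjoint)
    (hγ₁ : Amin ≤ Aγ) (hγ₂ : Aγ ≤ A'min.adjoint)
    (B B' : H →L[ℂ] H) (hB : IsBoundedInverse Aγ B)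
    (hγ'₁ : A'min ≤ Aγ.adjoint) (hγ'₂ : Aγ.adjoint ≤ Amin.adjoint)
    (hB' : IsBoundedInverse Aγ.adjoint B') :
    ∀ u Au v A'v : H, (u, Au) ∈ (A'min.adjoint).graph → (v, A'v) ∈ (Amin.adjoint).graph →
      ∀ a b : H, IsOrthProjOn (kerSub (Amin.adjoint)) Au a →
        IsOrthProjOn (kerSub (A'min.adjoint)) A'v b →
        ⟪Au, v⟫_ℂ - ⟪u, A'v⟫_ℂ = ⟪a, v - B' A'v⟫_ℂ - ⟪u - B Au, b⟫_ℂ := by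
  intro u Au v A'v hu hv a b ha hb
  have hγDense : Dense (Aγ.domain : Set H) :=
    hAminDense.mono (by exact_mod_cast hγ₁.1)
  have huγ : (B Au, Au) ∈ Aγ.graph := hB.2 Au
  have hvγ : (B' A'v, A'v) ∈ Aγ.adjoint.graph := hB'.2 A'v
  have huζ : (u - B Au, (0 : H)) ∈ (A'min.adjoint).graph := by
    have h2 : (B Au, Au) ∈ (A'min.adjoint).graph := LinearPMap.le_graph_of_le hγ₂ huγ
    have := (A'min.adjoint).graph.sub_mem hu h2
    simpa using this
  have hvζ : (v - B' A'v, (0 : H)) ∈ (Amin.adjoint).graph := by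
    have h2 : (B' A'v, A'v) ∈ (Amin.adjoint).graph := LinearPMap.le_graph_of_le hγ'₂ hvγ
    have := (Amin.adjoint).graph.sub_mem hv h2
    simpa using this
  have hfa := LinearPMap.adjoint_isFormalAdjoint hγDense (T := Aγ)
  obtain ⟨x, hx, hx2⟩ := Aγ.mem_graph_iff.mp huγ
  obtain ⟨y, hy, hy2⟩ := Aγ.adjoint.mem_graph_iff.mp hvγ
  simp only [] at hx hx2 hy hy2
  have key : ⟪Au, B' A'v⟫_ℂ = ⟪B Au, A'v⟫_ℂ := by
    have h := hfa y x
    rw [hx, hx2, hy, hy2] at h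
    rw [← inner_conj_symm (B Au) A'v, h, inner_conj_symm]
  have h1 : ⟪Au - a, v - B' A'v⟫_ℂ = 0 := ha.2 _ hvζ
  have h2 : ⟪A'v - b, u - B Au⟫_ℂ = 0 := hb.2 _ huζ
  have h2' : ⟪u - B Au, A'v - b⟫_ℂ = 0 := by
    rw [← inner_conj_symm, h2]; simp
  have e1 : ⟪a, v - B' A'v⟫_ℂ = ⟪Au, v - B' A'v⟫_ℂ := by
    rw [inner_sub_left, sub_eq_zero] at h1; exact h1.symm
  have e2 : ⟪u - B Au, b⟫_ℂ = ⟪u - B Au, A'v⟫_ℂ := by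
    rw [inner_sub_right, sub_eq_zero] at h2'; exact h2'.symm
  rw [e1, e2, inner_sub_right, inner_sub_left, key]
  ring
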